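/- Let A : X ⇒ X and B : X ⇒ X be maximally monotone operators. If there exists C ∈ {A, B} such that ran C = X and C is 3* monotone, then ran(Id − T_{(A,B)}) ≃ dom A − dom B. -/

import Mathlib

open Set Pointwise

/-- Domain of a set-valued operator. -/
def svDom {X : Type*} (A : X → Set X) : Set X := {x | (A x).Nonempty}

/-- Range of a set-valued operator. -/
def svRan {X : Type*} (A : X → Set X) : Set X := ⋃ x, A x

/-- Monotonicity of a set-valued operator. -/
def IsMonotoneOp {X : Type*} [NormedAddCommGroup X] [InnerProductSpace ℝ X]
    (A : X → Set X) : Prop :=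
  ∀ ⦃x u y v : X⦄, u ∈ A x → v ∈ A y → 0 ≤ (inner ℝ (x - y) (u - v) : ℝ)

/-- Maximal monotonicity of a set-valued operator. -/
def IsMaxMonotoneOp {X : Type*} [NormedAddCommGroup X] [InnerProductSpace ℝ X]
    (A : X → Set X) : Prop :=
  IsMonotoneOp A ∧
    ∀ x u : X, (∀ y v : X, v ∈ A y → 0 ≤ (inner ℝ (x - y) (u - v) : ℝ)) → u ∈ A x

/-- `A` is 3* monotone (rectangular): for every `x ∈ dom A` and `v ∈ ran A`, the set
`{⟪x - z, v - w⟫ : (z,w) ∈ gra A}` is bounded below. -/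
def Is3StarMonotoneOp {X : Type*} [NormedAddCommGroup X] [InnerProductSpace ℝ X]
    (A : X → Set X) : Prop :=
  ∀ x ∈ svDom A, ∀ v ∈ svRan A,
    BddBelow {r : ℝ | ∃ z w : X, w ∈ A z ∧ r = (inner ℝ (x - z) (v - w) : ℝ)}

/-- Two sets are nearly equal if they have the same closure and the same relative
(intrinsic) interior. -/
def NearEq {X : Type*} [NormedAddCommGroup X] [NormedSpace ℝ X] (C D : Set X) : Prop :=
  closure C = closure D ∧ intrinsicInterior ℝ C = intrinsicInterior ℝ D

/-- `J` is the resolvent of `A`: the single-valued, everywhere-defined map with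
`x - J x ∈ A (J x)` for all `x`. -/
def IsResolventOf {X : Type*} [NormedAddCommGroup X] (J : X → X) (A : X → Set X) : Prop :=
  ∀ x : X, x - J x ∈ A (J x)

/-- The Douglas–Rachford operator `T = Id - J_A + J_B ∘ (2 J_A - Id)` built from
the resolvents `J_A` and `J_B`. -/
noncomputable def drT {X : Type*} [NormedAddCommGroup X] [NormedSpace ℝ X]
    (JA JB : X → X) : X → X :=
  fun x => x - JA x + JB ((2 : ℝ) • JA x - x)

/-!
The map `G = Id - T_{(A,B)}` is firmly nonexpansive: its reflection `2G - Id` is `-R_B ∘ R_A`,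
a composition of nonexpansive reflections. Trivially `ran G ⊆ dom A - dom B`, so it suffices
to show `dom A - dom B ⊆ cl (ran G)` and `ri (cl (ran G)) ⊆ ran G`.

Both inclusions go through the regularised equations `ε x + G x = v`, which are
solvable by Banach's fixed point theorem. For the first, the 3* monotonicity of one operator and
the monotonicity of the other give `⟪x - w, v - G x⟫ ≤ c` for all `x`, which forces
`‖v - G xε‖ = ‖ε xε‖ → 0`. For the second, take `v ∈ ri (cl (ran G))` and `εₙ → 0`: if the
solutions `xₙ` have a convergent subsequence, its limit `p` satisfies `G p = v`; otherwise the
normalised `xₙ` accumulate at a unit vector of the direction of `aff (ran G)` that supports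
`cl (ran G)` at `v`, which is impossible at a relative interior point.
-/

open Filter Topology RealInnerProductSpace

section IntrinsicInterior

variable {X : Type*} [NormedAddCommGroup X] [NormedSpace ℝ X] {s t : Set X} {x : X}

theorem mem_intrinsicInterior_iff_dist_lt :
    x ∈ intrinsicInterior ℝ s ↔
      x ∈ s ∧ ∃ ε > 0, ∀ y ∈ affineSpan ℝ s, dist y x < ε → y ∈ s := by
  constructor
  · intro h
    obtain ⟨y, hy, rfl⟩ := mem_intrinsicInterior.1 h
    obtain ⟨ε, hε, hball⟩ := Metric.isOpen_iff.1 isOpen_interior y hy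
    refine ⟨interior_subset (s := Subtype.val ⁻¹' s) hy, ε, hε, fun z hz hzy => ?_⟩
    exact interior_subset (s := Subtype.val ⁻¹' s)
      (hball (show ⟨z, hz⟩ ∈ Metric.ball y ε from hzy))
  · rintro ⟨hxs, ε, hε, hball⟩
    refine mem_intrinsicInterior.2 ⟨⟨x, subset_affineSpan ℝ s hxs⟩, ?_, rfl⟩
    refine mem_interior.2 ⟨Metric.ball _ ε, ?_, Metric.isOpen_ball, Metric.mem_ball_self hε⟩
    rintro ⟨z, hz⟩ hzx
    exact hball z hz hzx

theorem intrinsicInterior_mono_of_subset_affineSpan (hst : s ⊆ t) (hts : t ⊆ affineSpan ℝ s) :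
    intrinsicInterior ℝ s ⊆ intrinsicInterior ℝ t := by
  have hspan : affineSpan ℝ t = affineSpan ℝ s :=
    le_antisymm (affineSpan_le.2 hts) (affineSpan_mono ℝ hst)
  intro x hx
  obtain ⟨hxs, ε, hε, hball⟩ := mem_intrinsicInterior_iff_dist_lt.1 hx
  rw [mem_intrinsicInterior_iff_dist_lt, hspan]
  exact ⟨hst hxs, ε, hε, fun y hy hyx => hst (hball y hy hyx)⟩

theorem intrinsicInterior_subset_intrinsicInterior_of_intrinsicInterior_subset (hst : s ⊆ t)
    (hts : intrinsicInterior ℝ t ⊆ s) : intrinsicInterior ℝ t ⊆ intrinsicInterior ℝ s := by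
  intro x hx
  obtain ⟨-, ε, hε, hball⟩ := mem_intrinsicInterior_iff_dist_lt.1 hx
  refine mem_intrinsicInterior_iff_dist_lt.2 ⟨hts hx, ε, hε, fun y hy hyx => hts ?_⟩
  refine mem_intrinsicInterior_iff_dist_lt.2
    ⟨hball y (affineSpan_mono ℝ hst hy) hyx, ε - dist y x, sub_pos.2 hyx, fun z hz hzy => ?_⟩
  exact hball z hz (by linarith [dist_triangle z y x])

theorem closure_subset_affineSpan [FiniteDimensional ℝ X] (s : Set X) :
    closure s ⊆ affineSpan ℝ s :=
  closure_minimal (subset_affineSpan ℝ s) (affineSpan ℝ s).closed_of_finiteDimensional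

theorem nearEq_of_subset_of_subset_closure [FiniteDimensional ℝ X] {E D : Set X} (hED : E ⊆ D)
    (hDE : D ⊆ closure E) (hri : intrinsicInterior ℝ (closure E) ⊆ E) : NearEq E D := by
  have hclE : closure E ⊆ affineSpan ℝ D :=
    (closure_subset_affineSpan E).trans (affineSpan_mono ℝ hED)
  have hriD : intrinsicInterior ℝ D ⊆ E :=
    (intrinsicInterior_mono_of_subset_affineSpan hDE hclE).trans hri
  have hriE : intrinsicInterior ℝ E ⊆ intrinsicInterior ℝ D :=
    intrinsicInterior_mono_of_subset_affineSpan hED (hDE.trans (closure_subset_affineSpan E))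
  exact ⟨(closure_mono hED).antisymm (closure_minimal hDE isClosed_closure),
    hriE.antisymm (intrinsicInterior_subset_intrinsicInterior_of_intrinsicInterior_subset hED hriD)⟩

end IntrinsicInterior

theorem exists_subseq_tendsto_or_tendsto_inv_one_add_norm_smul {X : Type*}
    [NormedAddCommGroup X] [NormedSpace ℝ X] [ProperSpace X] (x : ℕ → X) :
    (∃ φ : ℕ → ℕ, StrictMono φ ∧ ∃ p, Tendsto (x ∘ φ) atTop (𝓝 p)) ∨
      ∃ φ : ℕ → ℕ, StrictMono φ ∧ ∃ q, ‖q‖ = 1 ∧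
        Tendsto (fun n => (1 + ‖x (φ n)‖)⁻¹) atTop (𝓝 0) ∧
        Tendsto (fun n => (1 + ‖x (φ n)‖)⁻¹ • x (φ n)) atTop (𝓝 q) := by
  set r : ℕ → ℝ := fun n => (1 + ‖x n‖)⁻¹
  have hr0 : ∀ n, 0 < r n := fun n => by positivity
  have hnorm : ∀ n, ‖r n • x n‖ = 1 - r n := fun n => by
    rw [norm_smul, Real.norm_of_nonneg (hr0 n).le]
    simp only [r]
    field_simp
    ring
  have hmem : ∀ n, (r n, r n • x n) ∈ Set.Icc (0 : ℝ) 1 ×ˢ Metric.closedBall (0 : X) 1 :=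
    fun n => ⟨⟨(hr0 n).le, by linarith [hnorm n, norm_nonneg (r n • x n)]⟩,
      by rw [mem_closedBall_zero_iff, hnorm n]; linarith [hr0 n]⟩
  obtain ⟨⟨ρ, q⟩, -, φ, hφ, hlim⟩ :=
    (isCompact_Icc.prod (isCompact_closedBall (0 : X) 1)).tendsto_subseq hmem
  have hr : Tendsto (r ∘ φ) atTop (𝓝 ρ) := (continuous_fst.tendsto _).comp hlim
  have hq : Tendsto (fun n => r (φ n) • x (φ n)) atTop (𝓝 q) :=
    (continuous_snd.tendsto _).comp hlim
  rcases (ge_of_tendsto' hr fun n => (hr0 _).le).eq_or_lt with rfl | hρ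
  · refine Or.inr ⟨φ, hφ, q, tendsto_nhds_unique hq.norm ?_, hr, hq⟩
    simpa [hnorm] using (tendsto_const_nhds (x := (1 : ℝ))).sub hr
  · refine Or.inl ⟨φ, hφ, ρ⁻¹ • q, ((hr.inv₀ hρ.ne').smul hq).congr fun n => ?_⟩
    exact inv_smul_smul₀ (hr0 _).ne' _

section InnerProductSpace

variable {X : Type*} [NormedAddCommGroup X] [InnerProductSpace ℝ X]

theorem eq_zero_of_forall_inner_sub_nonneg_of_mem_intrinsicInterior {K : Set X} {x₀ q : X}
    (hx₀ : x₀ ∈ intrinsicInterior ℝ K) (hq : q ∈ (affineSpan ℝ K).direction)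
    (hsupp : ∀ z ∈ K, 0 ≤ ⟪q, x₀ - z⟫) : q = 0 := by
  obtain ⟨hx₀K, ε, hε, hball⟩ := mem_intrinsicInterior_iff_dist_lt.1 hx₀
  set t := ε / (‖q‖ + 1)
  have ht : 0 < t := by positivity
  have hmem : t • q + x₀ ∈ K := by
    refine hball _ (AffineSubspace.vadd_mem_of_mem_direction (Submodule.smul_mem _ t hq)
      (subset_affineSpan ℝ K hx₀K)) ?_
    rw [dist_eq_norm, add_sub_cancel_right, norm_smul, Real.norm_of_nonneg ht.le]
    calc t * ‖q‖ < t * (‖q‖ + 1) := by gcongr; linarith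
      _ = ε := div_mul_cancel₀ _ (by positivity)
  have h := hsupp _ hmem
  rw [sub_add_cancel_right, inner_neg_right, real_inner_smul_right,
    real_inner_self_eq_norm_sq] at h
  have hq2 : ‖q‖ ^ 2 ≤ 0 := le_of_mul_le_mul_left (by linarith) ht
  exact norm_eq_zero.1 ((pow_eq_zero_iff two_ne_zero).1 (le_antisymm hq2 (sq_nonneg _)))

def IsFirmlyNonexpansive (G : X → X) : Prop :=
  ∀ x y, ‖G x - G y‖ ^ 2 ≤ ⟪x - y, G x - G y⟫

theorem isFirmlyNonexpansive_iff_norm_reflection_sub_le {G : X → X} :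
    IsFirmlyNonexpansive G ↔
      ∀ x y, ‖(2 : ℝ) • G x - x - ((2 : ℝ) • G y - y)‖ ≤ ‖x - y‖ := by
  have key : ∀ x y, ‖(2 : ℝ) • G x - x - ((2 : ℝ) • G y - y)‖ ^ 2 =
      4 * (‖G x - G y‖ ^ 2 - ⟪x - y, G x - G y⟫) + ‖x - y‖ ^ 2 := by
    intro x y
    rw [show (2 : ℝ) • G x - x - ((2 : ℝ) • G y - y) = (2 : ℝ) • (G x - G y) - (x - y) by
      module, norm_sub_sq_real, norm_smul, real_inner_smul_left, real_inner_comm]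
    norm_num
    ring
  refine forall₂_congr fun x y => ?_
  rw [← sq_le_sq₀ (norm_nonneg _) (norm_nonneg _), key]
  constructor <;> intro h <;> linarith

namespace IsFirmlyNonexpansive

variable {G : X → X} (hG : IsFirmlyNonexpansive G)
include hG

theorem inner_sub_nonneg (x y : X) : 0 ≤ ⟪x - y, G x - G y⟫ :=
  (sq_nonneg _).trans (hG x y)

theorem lipschitzWith_one : LipschitzWith 1 G := by
  refine LipschitzWith.of_dist_le_mul fun x y => ?_
  rw [NNReal.coe_one, one_mul, dist_eq_norm, dist_eq_norm]
  have h := (hG x y).trans (real_inner_le_norm _ _)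
  nlinarith [norm_nonneg (G x - G y), norm_nonneg (x - y)]

/-- `ε x + G x = v` rewrites as `x = (2ε + 1)⁻¹ (2v - (2G - Id) x)`, a contraction. -/
theorem exists_smul_add_eq [CompleteSpace X] {ε : ℝ} (hε : 0 < ε) (v : X) :
    ∃ x, ε • x + G x = v := by
  obtain ⟨k, hk⟩ : ∃ k : NNReal, (k : ℝ) = (2 * ε + 1)⁻¹ := ⟨⟨_, by positivity⟩, rfl⟩
  set Φ : X → X := fun x => (2 * ε + 1)⁻¹ • ((2 : ℝ) • v - ((2 : ℝ) • G x - x))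
  have hΦ : ContractingWith k Φ := by
    refine ⟨?_, LipschitzWith.of_dist_le_mul fun x y => ?_⟩
    · rw [← NNReal.coe_lt_coe, hk, NNReal.coe_one]
      exact inv_lt_one_of_one_lt₀ (by linarith)
    rw [dist_eq_norm, dist_eq_norm, ← smul_sub, norm_smul, hk,
      Real.norm_of_nonneg (by positivity), sub_sub_sub_cancel_left, norm_sub_rev]
    exact mul_le_mul_of_nonneg_left
      (isFirmlyNonexpansive_iff_norm_reflection_sub_le.1 hG x y) (by positivity)
  refine ⟨ContractingWith.fixedPoint Φ hΦ, ?_⟩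
  have hfix : Φ _ = _ := hΦ.fixedPoint_isFixedPt
  set x := ContractingWith.fixedPoint Φ hΦ
  have hfix' : (2 : ℝ) • v - ((2 : ℝ) • G x - x) = (2 * ε + 1) • x := by
    conv_rhs => rw [← hfix]
    exact (smul_inv_smul₀ (by positivity) _).symm
  linear_combination (norm := module) (-1 / 2 : ℝ) • hfix'

theorem mem_closure_range_of_forall_inner_le [CompleteSpace X] {v w : X} {c : ℝ}
    (h : ∀ x, ⟪x - w, v - G x⟫ ≤ c) : v ∈ closure (Set.range G) := by
  rw [Metric.mem_closure_iff]
  intro δ hδ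
  have hlim : Tendsto (fun ε : ℝ => 2 * ε * c + ε ^ 2 * ‖w‖ ^ 2) (𝓝[>] 0) (𝓝 0) := by
    have : Continuous fun ε : ℝ => 2 * ε * c + ε ^ 2 * ‖w‖ ^ 2 := by fun_prop
    simpa using (this.tendsto 0).mono_left nhdsWithin_le_nhds
  obtain ⟨ε, hsmall, hε⟩ :=
    ((hlim.eventually (gt_mem_nhds (pow_pos hδ 2))).and self_mem_nhdsWithin).exists
  obtain ⟨x, hx⟩ := hG.exists_smul_add_eq hε v
  refine ⟨G x, Set.mem_range_self x, ?_⟩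
  have hu : v - G x = ε • x := by rw [← hx]; abel
  have hxw : ε * ‖x‖ ^ 2 - ε * ⟪w, x⟫ ≤ c := by
    have := h x
    rwa [hu, inner_sub_left, real_inner_smul_right, real_inner_smul_right,
      real_inner_self_eq_norm_sq] at this
  have hle : ‖ε • x‖ ^ 2 ≤ 2 * ε * c + ε ^ 2 * ‖w‖ ^ 2 := by
    rw [norm_smul, Real.norm_of_nonneg (le_of_lt hε)]
    nlinarith [real_inner_le_norm w x, sq_nonneg (ε * ‖x‖ - ε * ‖w‖),
      mul_le_mul_of_nonneg_left hxw (le_of_lt hε), norm_nonneg x, norm_nonneg w]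
  rw [dist_eq_norm, hu]
  exact lt_of_pow_lt_pow_left₀ 2 hδ.le (hle.trans_lt hsmall)

end IsFirmlyNonexpansive

theorem inner_sub_ge_of_smul_add_eq {G : X → X} (hG : ∀ x y, 0 ≤ ⟪x - y, G x - G y⟫)
    {ε : ℝ} (hε : 0 ≤ ε) {x v : X} (hx : ε • x + G x = v) (w : X) :
    -(ε * ‖w‖ ^ 2 / 4) ≤ ⟪x - w, v - G w⟫ := by
  have hmono := hG x w
  rw [← hx, show ε • x + G x - G w = (G x - G w) + ε • x by abel, inner_add_right,
    real_inner_smul_right, show ⟪x - w, x⟫ = ‖x‖ ^ 2 - ⟪w, x⟫ by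
      rw [inner_sub_left, real_inner_self_eq_norm_sq]]
  nlinarith [real_inner_le_norm w x, sq_nonneg (‖x‖ - ‖w‖ / 2), norm_nonneg x, norm_nonneg w,
    real_inner_comm x w]

theorem inner_nonneg_of_tendsto_smul_of_smul_add_eq {ι : Type*} {l : Filter ι} [l.NeBot]
    {G : X → X} (hG : ∀ x y, 0 ≤ ⟪x - y, G x - G y⟫) {ε r : ι → ℝ} {x : ι → X} {v q : X}
    (hε0 : ∀ i, 0 ≤ ε i) (hε : Tendsto ε l (𝓝 0)) (hr0 : ∀ i, 0 ≤ r i) (hr : Tendsto r l (𝓝 0))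
    (hx : ∀ i, ε i • x i + G (x i) = v) (hq : Tendsto (fun i => r i • x i) l (𝓝 q)) (w : X) :
    0 ≤ ⟪q, v - G w⟫ := by
  have hlow : Tendsto (fun i => r i * -(ε i * ‖w‖ ^ 2 / 4)) l (𝓝 0) := by
    simpa using hr.mul ((hε.mul_const (‖w‖ ^ 2)).div_const 4).neg
  have hinner : Tendsto (fun i => ⟪r i • x i - r i • w, v - G w⟫) l (𝓝 ⟪q, v - G w⟫) := by
    simpa using (hq.sub (hr.smul_const w)).inner tendsto_const_nhds
  refine le_of_tendsto_of_tendsto' hlow hinner fun i => ?_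
  rw [← smul_sub, real_inner_smul_left]
  exact mul_le_mul_of_nonneg_left (inner_sub_ge_of_smul_add_eq hG (hε0 i) (hx i) w) (hr0 i)

theorem IsFirmlyNonexpansive.intrinsicInterior_closure_range_subset [FiniteDimensional ℝ X]
    {G : X → X} (hG : IsFirmlyNonexpansive G) :
    intrinsicInterior ℝ (closure (Set.range G)) ⊆ Set.range G := by
  intro v hv
  set ε : ℕ → ℝ := fun n => 1 / ((n : ℝ) + 1)
  have hε0 : ∀ n, 0 < ε n := fun n => Nat.one_div_pos_of_nat
  have hε : Tendsto ε atTop (𝓝 0) := tendsto_one_div_add_atTop_nhds_zero_nat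
  choose x hx using fun n => hG.exists_smul_add_eq (hε0 n) v
  have hGx : ∀ n, G (x n) = v - ε n • x n := fun n => by rw [← hx n]; abel
  rcases exists_subseq_tendsto_or_tendsto_inv_one_add_norm_smul x with
    ⟨φ, hφ, p, hp⟩ | ⟨φ, hφ, q, hq1, hr, hq⟩
  · have hGp : Tendsto (fun n => G (x (φ n))) atTop (𝓝 v) := by
      simpa [hGx] using
        tendsto_const_nhds (x := v) |>.sub ((hε.comp hφ.tendsto_atTop).smul hp)
    exact ⟨p, tendsto_nhds_unique ((hG.lipschitzWith_one.continuous.tendsto p).comp hp) hGp⟩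
  · set V := (affineSpan ℝ (closure (Set.range G))).direction
    have hxV : ∀ n, x n ∈ V := fun n => by
      rw [← Submodule.smul_mem_iff V (hε0 n).ne',
        show ε n • x n = v - G (x n) by rw [hGx]; abel]
      exact AffineSubspace.vsub_mem_direction
        (subset_affineSpan ℝ _ (intrinsicInterior_subset hv))
        (subset_affineSpan ℝ _ (subset_closure (Set.mem_range_self _)))
    have hqV : q ∈ V := V.closed_of_finiteDimensional.mem_of_tendsto hq
      (Eventually.of_forall fun n => V.smul_mem _ (hxV (φ n)))
    have hclosed : IsClosed {z | 0 ≤ ⟪q, v - z⟫} := isClosed_le continuous_const (by fun_prop)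
    have hsupp : ∀ z ∈ closure (Set.range G), 0 ≤ ⟪q, v - z⟫ := by
      refine fun z hz => closure_minimal (Set.range_subset_iff.2 fun w => ?_) hclosed hz
      exact inner_nonneg_of_tendsto_smul_of_smul_add_eq hG.inner_sub_nonneg
        (fun n => (hε0 _).le) (hε.comp hφ.tendsto_atTop) (fun n => by positivity) hr
        (fun n => hx (φ n)) hq w
    simp [eq_zero_of_forall_inner_sub_nonneg_of_mem_intrinsicInterior hv hqV hsupp] at hq1

end InnerProductSpace

section DouglasRachford

variable {X : Type*} [NormedAddCommGroup X] [InnerProductSpace ℝ X] {A B : X → Set X}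
  {JA JB : X → X}

theorem IsResolventOf.isFirmlyNonexpansive {J : X → X} (hJ : IsResolventOf J A)
    (hA : IsMonotoneOp A) : IsFirmlyNonexpansive J := by
  intro x y
  have h := hA (hJ x) (hJ y)
  rw [show x - J x - (y - J y) = (x - y) - (J x - J y) by abel, inner_sub_right,
    real_inner_self_eq_norm_sq, real_inner_comm] at h
  linarith

theorem sub_drT_apply (x : X) : x - drT JA JB x = JA x - JB ((2 : ℝ) • JA x - x) := by
  simp only [drT]
  abel

theorem two_smul_sub_drT_apply (x : X) :
    (2 : ℝ) • (x - drT JA JB x) - x =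
      -((2 : ℝ) • JB ((2 : ℝ) • JA x - x) - ((2 : ℝ) • JA x - x)) := by
  rw [sub_drT_apply]
  module

theorem isFirmlyNonexpansive_id_sub_drT (hA : IsMonotoneOp A) (hB : IsMonotoneOp B)
    (hJA : IsResolventOf JA A) (hJB : IsResolventOf JB B) :
    IsFirmlyNonexpansive fun x => x - drT JA JB x := by
  have hRA := isFirmlyNonexpansive_iff_norm_reflection_sub_le.1 (hJA.isFirmlyNonexpansive hA)
  have hRB := isFirmlyNonexpansive_iff_norm_reflection_sub_le.1 (hJB.isFirmlyNonexpansive hB)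
  refine isFirmlyNonexpansive_iff_norm_reflection_sub_le.2 fun x y => ?_
  rw [two_smul_sub_drT_apply, two_smul_sub_drT_apply, neg_sub_neg, norm_sub_rev]
  exact (hRB _ _).trans (hRA x y)

theorem range_id_sub_drT_subset (hJA : IsResolventOf JA A) (hJB : IsResolventOf JB B) :
    Set.range (fun x => x - drT JA JB x) ⊆ svDom A - svDom B := by
  refine Set.range_subset_iff.2 fun x => ?_
  rw [sub_drT_apply]
  exact Set.sub_mem_sub ⟨_, hJA x⟩ ⟨_, hJB _⟩

theorem exists_forall_inner_sub_drT_le_of_is3StarMonotoneOp_left (hB : IsMonotoneOp B)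
    (hranA : svRan A = Set.univ) (h3A : Is3StarMonotoneOp A) (hJA : IsResolventOf JA A)
    (hJB : IsResolventOf JB B) {v : X} (hv : v ∈ svDom A - svDom B) :
    ∃ w c, ∀ x, ⟪x - w, v - (x - drT JA JB x)⟫ ≤ c := by
  obtain ⟨y₀, hy₀, z₀, ⟨b₀, hb₀⟩, rfl⟩ := hv
  obtain ⟨c, hc⟩ := h3A y₀ hy₀ (y₀ - z₀ - b₀) (hranA ▸ Set.mem_univ _)
  refine ⟨y₀ + (y₀ - z₀ - b₀), -c, fun x => ?_⟩
  rw [sub_drT_apply]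
  set y := JA x
  set z := JB ((2 : ℝ) • y - x)
  have h3 : c ≤ ⟪y₀ - y, y₀ - z₀ - b₀ - (x - y)⟫ := hc ⟨y, x - y, hJA x, rfl⟩
  have hmono : 0 ≤ ⟪z - z₀, (2 : ℝ) • y - x - z - b₀⟫ := hB (hJB _) hb₀
  rw [show y₀ - y = -(y - y₀) by abel] at h3
  rw [show z - z₀ = (y - y₀) + (y₀ - z₀ - (y - z)) by abel,
    show (2 : ℝ) • y - x - z - b₀ = (y₀ - z₀ - b₀ - (x - y)) - (y₀ - z₀ - (y - z)) by module]
    at hmono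
  rw [show x - (y₀ + (y₀ - z₀ - b₀)) = (y - y₀) - (y₀ - z₀ - b₀ - (x - y)) by abel]
  generalize y - y₀ = p at h3 hmono ⊢
  generalize y₀ - z₀ - b₀ - (x - y) = q at h3 hmono ⊢
  generalize y₀ - z₀ - (y - z) = u at hmono ⊢
  simp only [inner_add_left, inner_sub_left, inner_sub_right, inner_neg_left,
    real_inner_self_eq_norm_sq] at h3 hmono ⊢
  nlinarith [real_inner_comm p u, real_inner_comm q u, real_inner_comm p q, sq_nonneg ‖u‖]

theorem exists_forall_inner_sub_drT_le_of_is3StarMonotoneOp_right (hA : IsMonotoneOp A)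
    (hranB : svRan B = Set.univ) (h3B : Is3StarMonotoneOp B) (hJA : IsResolventOf JA A)
    (hJB : IsResolventOf JB B) {v : X} (hv : v ∈ svDom A - svDom B) :
    ∃ w c, ∀ x, ⟪x - w, v - (x - drT JA JB x)⟫ ≤ c := by
  obtain ⟨y₀, ⟨a₀, ha₀⟩, z₀, hz₀, rfl⟩ := hv
  obtain ⟨c, hc⟩ := h3B z₀ hz₀ (y₀ - z₀ - a₀) (hranB ▸ Set.mem_univ _)
  refine ⟨y₀ + a₀, -c, fun x => ?_⟩
  rw [sub_drT_apply]
  set y := JA x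
  set z := JB ((2 : ℝ) • y - x)
  have h3 : c ≤ ⟪z₀ - z, y₀ - z₀ - a₀ - ((2 : ℝ) • y - x - z)⟫ := hc ⟨z, _, hJB _, rfl⟩
  have hmono : 0 ≤ ⟪y - y₀, x - y - a₀⟫ := hA (hJA x) ha₀
  rw [show z₀ - z = -(z - z₀) by abel,
    show y₀ - z₀ - a₀ - ((2 : ℝ) • y - x - z) = (x - y - a₀) + (y₀ - z₀ - (y - z)) by module]
    at h3
  rw [show y - y₀ = (z - z₀) - (y₀ - z₀ - (y - z)) by abel] at hmono
  rw [show x - (y₀ + a₀) = (z - z₀) + (x - y - a₀) - (y₀ - z₀ - (y - z)) by abel]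
  generalize z - z₀ = p at h3 hmono ⊢
  generalize x - y - a₀ = q at h3 hmono ⊢
  generalize y₀ - z₀ - (y - z) = u at h3 hmono ⊢
  simp only [inner_add_left, inner_add_right, inner_sub_left, inner_neg_left,
    real_inner_self_eq_norm_sq] at h3 hmono ⊢
  nlinarith [real_inner_comm p u, real_inner_comm q u, real_inner_comm p q, sq_nonneg ‖u‖]

end DouglasRachford

/-- If one of the maximally monotone operators `A, B` is 3* monotone with full range,
then `ran (Id - T_{(A,B)}) ≃ dom A - dom B`. -/
theorem ran_id_sub_drT_nearEq_dom_sub {X : Type*} [NormedAddCommGroup X]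
    [InnerProductSpace ℝ X] [FiniteDimensional ℝ X] (A B : X → Set X)
    (hA : IsMaxMonotoneOp A) (hB : IsMaxMonotoneOp B)
    (hC : (svRan A = Set.univ ∧ Is3StarMonotoneOp A) ∨
      (svRan B = Set.univ ∧ Is3StarMonotoneOp B))
    (JA JB : X → X) (hJA : IsResolventOf JA A) (hJB : IsResolventOf JB B) :
    NearEq (Set.range fun x => x - drT JA JB x) (svDom A - svDom B) := by
  have hG := isFirmlyNonexpansive_id_sub_drT hA.1 hB.1 hJA hJB
  refine nearEq_of_subset_of_subset_closure (range_id_sub_drT_subset hJA hJB) (fun v hv => ?_)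
    hG.intrinsicInterior_closure_range_subset
  obtain ⟨w, c, h⟩ : ∃ w c, ∀ x, ⟪x - w, v - (x - drT JA JB x)⟫ ≤ c := by
    rcases hC with ⟨hran, h3⟩ | ⟨hran, h3⟩
    · exact exists_forall_inner_sub_drT_le_of_is3StarMonotoneOp_left hB.1 hran h3 hJA hJB hv
    · exact exists_forall_inner_sub_drT_le_of_is3StarMonotoneOp_right hA.1 hran h3 hJA hJB hv
  exact hG.mem_closure_range_of_forall_inner_le h
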